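/- Let q be a nonzero complex number that is not a root of unity, with a fixed square root q^{1/2}, and let α : ℤ → ℂ have finite support. Define F(L) := Σ_{a ∈ ℤ} α(a) { T_{-1}(L, a; q) + T_{-1}(L, a+1; q) } for nonnegative integers L. Then for every nonnegative integer L, Σ_{i≥0} q^{C(i+1,2)} [L choose i]_q F(i) = Σ_{a ∈ ℤ} α(a) q^{C(a+1,2)} [2L+1 choose L-a]_q, where C(a,2) = a(a-1)/2 denotes the binomial coefficient. -/

import Mathlib

/-- The finite q-Pochhammer symbol `(a;q)_n`. -/
noncomputable def qPoch (a q : ℂ) (n : ℕ) : ℂ :=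
  ∏ j ∈ Finset.range n, (1 - a * q ^ j)

/-- The infinite q-Pochhammer symbol `(a;q)_∞`. -/
noncomputable def qPochInf (a q : ℂ) : ℂ :=
  ∏' j : ℕ, (1 - a * q ^ j)

/-- `1/(q;q)_n` for an integer `n`, with the convention that it is `0` for `n < 0`. -/
noncomputable def qPochInvZ (q : ℂ) (n : ℤ) : ℂ :=
  if 0 ≤ n then (qPoch q q n.toNat)⁻¹ else 0

/-- The q-trinomial coefficient `(L, b; a; q)_2`. -/
noncomputable def qTrinomial (L : ℕ) (b a : ℤ) (q : ℂ) : ℂ :=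
  ∑' n : ℕ, q ^ ((n : ℤ) * ((n : ℤ) + b)) * qPoch q q L * qPochInvZ q (n : ℤ) *
    qPochInvZ q ((n : ℤ) + a) * qPochInvZ q ((L : ℤ) - 2 * (n : ℤ) - a)

/-- The q-trinomial coefficient `T_n(L, a; q)`, where `s` is a fixed square root of `q`. -/
noncomputable def qTriT (n : ℤ) (L : ℕ) (a : ℤ) (q s : ℂ) : ℂ :=
  s ^ ((L : ℤ) * ((L : ℤ) - n) - a * (a - n)) * qTrinomial L (a - n) a q⁻¹

/-- The Gaussian (q-binomial) coefficient `[N choose k]_q`, zero unless `0 ≤ k ≤ N`. -/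
noncomputable def qBinom (N k : ℤ) (q : ℂ) : ℂ :=
  if 0 ≤ k ∧ k ≤ N then
    qPoch q q N.toNat * (qPoch q q k.toNat)⁻¹ * (qPoch q q (N - k).toNat)⁻¹
  else 0

/-- The quadratic form `Q(m,n) = 2m² + 6mn + 6n²` from Capparelli's theorems. -/
def Qcap (m n : ℕ) : ℕ := 2 * m ^ 2 + 6 * m * n + 6 * n ^ 2

/-!
Since `(q⁻¹;q⁻¹)_m = (-1)^m q^(-m(m+1)/2) (q;q)_m`, each summand of the q-trinomial coefficient at
base `q⁻¹` is a power of `q` times `[L, n] [L-n, n+a]`, which gives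
`T₋₁(L, a) = ∑ₙ q^(w(w+1)/2) [L, n] [L-n, n+a]` with `w = L - 2n - a`; q-Pascal then merges two
consecutive values of `a` into `∑ₙ q^(w(w-1)/2) [L, n] [L-n+1, n+a+1]`. In the left-hand side,
`[L, i] [i, n] = [L, m] [L-m, n]` with `m = i - n`, and the double sum collapses under the
q-Chu–Vandermonde identity twice: the sum over `n` gives `[L+1, m-a]`, then the sum over `m` gives
`[2L+1, L-a]`. The theorem is the combination of these identities with weights `α a`.
-/

section QBinomial

variable {q : ℂ}

lemma sq_zpow {G : Type*} [DivisionMonoid G] (s : G) (e : ℤ) : (s ^ 2) ^ e = s ^ (2 * e) := by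
  rw [zpow_mul]
  norm_cast

lemma zpow_mul_succ_div_two {G : Type*} [DivisionMonoid G] {s q : G} (hs : s ^ 2 = q) (b : ℤ) :
    q ^ ((b + 1) * b / 2) = s ^ (b * (b + 1)) := by
  rw [← hs, sq_zpow, Int.mul_ediv_cancel' (mul_comm b _ ▸ Int.even_mul_succ_self b).two_dvd,
    mul_comm]

lemma pow_mul_succ_div_two {G : Type*} [DivisionMonoid G] {s q : G} (hs : s ^ 2 = q) (i : ℕ) :
    q ^ ((i + 1) * i / 2) = s ^ ((i : ℤ) * (i + 1)) := by
  rw [← zpow_mul_succ_div_two hs, ← zpow_natCast]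
  push_cast
  rfl

lemma qPoch_succ (a q : ℂ) (n : ℕ) : qPoch a q (n + 1) = qPoch a q n * (1 - a * q ^ n) :=
  Finset.prod_range_succ _ _

lemma qPoch_zero (a q : ℂ) : qPoch a q 0 = 1 :=
  Finset.prod_range_zero _

lemma qPoch_self_ne_zero (hroot : ∀ k : ℕ, 0 < k → q ^ k ≠ 1) (n : ℕ) : qPoch q q n ≠ 0 := by
  refine Finset.prod_ne_zero_iff.mpr fun j _ h => hroot (j + 1) j.succ_pos ?_
  rw [pow_succ']
  exact (sub_eq_zero.mp h).symm

lemma qBinom_of_neg {N k : ℤ} (hk : k < 0) : qBinom N k q = 0 :=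
  if_neg fun h => by omega

lemma qBinom_of_lt {N k : ℤ} (hN : N < k) : qBinom N k q = 0 :=
  if_neg fun h => by omega

lemma qBinom_of_le {N k : ℤ} (hk : 0 ≤ k) (hkN : k ≤ N) :
    qBinom N k q = qPoch q q N.toNat / (qPoch q q k.toNat * qPoch q q (N - k).toNat) := by
  rw [qBinom, if_pos ⟨hk, hkN⟩, div_mul_eq_div_div, div_eq_mul_inv, div_eq_mul_inv]

lemma qBinom_natCast (n k : ℕ) (hk : k ≤ n) :
    qBinom n k q = qPoch q q n / (qPoch q q k * qPoch q q (n - k)) := by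
  rw [qBinom_of_le (by positivity) (by exact_mod_cast hk)]
  simp only [Int.toNat_natCast]
  congr
  omega

lemma qBinom_sub_right (N k : ℤ) : qBinom N (N - k) q = qBinom N k q := by
  by_cases h : 0 ≤ k ∧ k ≤ N
  · rw [qBinom_of_le (by omega) (by omega), qBinom_of_le h.1 h.2, sub_sub_cancel, mul_comm]
  · rcases not_and_or.mp h with h | h
    · rw [qBinom_of_lt (by omega), qBinom_of_neg (by omega)]
    · rw [qBinom_of_neg (by omega), qBinom_of_lt (by omega)]

lemma qBinom_zero_right (hroot : ∀ k : ℕ, 0 < k → q ^ k ≠ 1) (n : ℕ) : qBinom n 0 q = 1 := by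
  rw [← Nat.cast_zero, qBinom_natCast n 0 n.zero_le, Nat.sub_zero, qPoch_zero, one_mul,
    div_self (qPoch_self_ne_zero hroot n)]

lemma qBinom_self (hroot : ∀ k : ℕ, 0 < k → q ^ k ≠ 1) (n : ℕ) : qBinom n n q = 1 := by
  rw [← qBinom_sub_right, sub_self, qBinom_zero_right hroot]

lemma qBinom_mul_qBinom (hroot : ∀ k : ℕ, 0 < k → q ^ k ≠ 1) (L i n : ℤ) :
    qBinom L i q * qBinom i n q = qBinom L n q * qBinom (L - n) (i - n) q := by
  by_cases h : 0 ≤ n ∧ n ≤ i ∧ i ≤ L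
  · obtain ⟨hn, hni, hiL⟩ := h
    rw [qBinom_of_le (by omega) hiL, qBinom_of_le hn hni, qBinom_of_le hn (by omega),
      qBinom_of_le (by omega) (by omega), sub_sub_sub_cancel_right]
    have := qPoch_self_ne_zero hroot i.toNat
    have := qPoch_self_ne_zero hroot (L - n).toNat
    field_simp
  · rcases (by omega : n < 0 ∨ i < n ∨ L < i) with h | h | h
    · rw [qBinom_of_neg h, qBinom_of_neg h, mul_zero, zero_mul]
    · rw [qBinom_of_lt h, qBinom_of_neg (by omega : i - n < 0), mul_zero, mul_zero]
    · rw [qBinom_of_lt h, qBinom_of_lt (by omega : L - n < i - n), zero_mul, mul_zero]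

lemma qBinom_succ (hroot : ∀ k : ℕ, 0 < k → q ^ k ≠ 1) (N : ℕ) (k : ℤ) :
    qBinom (N + 1) k q = qBinom N k q + q ^ (N + 1 - k) * qBinom N (k - 1) q := by
  rcases (by omega : k < 0 ∨ k = 0 ∨ (1 ≤ k ∧ k ≤ N) ∨ k = N + 1 ∨ N + 1 < k) with
    hk | rfl | ⟨hk1, hkN⟩ | rfl | hk
  · rw [qBinom_of_neg hk, qBinom_of_neg hk, qBinom_of_neg (by omega), mul_zero, add_zero]
  · rw [← Nat.cast_succ, qBinom_zero_right hroot, qBinom_zero_right hroot,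
      qBinom_of_neg (by omega), mul_zero, add_zero]
  · obtain ⟨j, rfl⟩ : ∃ j : ℕ, k = j + 1 := ⟨(k - 1).toNat, by omega⟩
    obtain ⟨d, rfl⟩ : ∃ d : ℕ, N = j + 1 + d := ⟨N - (j + 1), by omega⟩
    rw [show ((j + 1 + d : ℕ) : ℤ) + 1 = ((j + 1 + d + 1 : ℕ) : ℤ) by push_cast; ring,
      show (j : ℤ) + 1 = ((j + 1 : ℕ) : ℤ) by push_cast; ring,
      show ((j + 1 : ℕ) : ℤ) - 1 = j by push_cast; ring,
      show ((j + 1 + d + 1 : ℕ) : ℤ) - ((j + 1 : ℕ) : ℤ) = ((d + 1 : ℕ) : ℤ) by push_cast; ring,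
      zpow_natCast, qBinom_natCast _ _ (by omega), qBinom_natCast _ _ (by omega),
      qBinom_natCast _ _ (by omega), show j + 1 + d + 1 - (j + 1) = d + 1 by omega,
      show j + 1 + d - (j + 1) = d by omega, show j + 1 + d - j = d + 1 by omega,
      qPoch_succ _ _ (j + 1 + d), qPoch_succ _ _ j, qPoch_succ _ _ d]
    obtain ⟨hPj, hj⟩ := mul_ne_zero_iff.mp (qPoch_succ q q j ▸ qPoch_self_ne_zero hroot (j + 1))
    obtain ⟨hPd, hd⟩ := mul_ne_zero_iff.mp (qPoch_succ q q d ▸ qPoch_self_ne_zero hroot (d + 1))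
    field_simp
    ring
  · rw [← Nat.cast_succ, qBinom_self hroot, qBinom_of_lt (by omega), sub_self, zpow_zero,
      Nat.cast_succ, add_sub_cancel_right, qBinom_self hroot, zero_add, one_mul]
  · rw [qBinom_of_lt (by omega), qBinom_of_lt (by omega), qBinom_of_lt (by omega), mul_zero,
      add_zero]

lemma qVandermonde (hq : q ≠ 0) (hroot : ∀ k : ℕ, 0 < k → q ^ k ≠ 1) (A B : ℕ) (r : ℤ) :
    qBinom (A + B) r q =
      ∑ k ∈ Finset.range (A + 1), q ^ (k * (B - r + k)) * qBinom A k q * qBinom B (r - k) q := by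
  induction A generalizing r with
  | zero =>
    have h00 : qBinom 0 0 q = 1 := by exact_mod_cast qBinom_zero_right hroot 0
    simp [h00]
  | succ A ih =>
    have hsplit : ∀ k : ℕ, q ^ (k * (B - r + k)) * qBinom ↑(A + 1) k q * qBinom B (r - k) q =
        q ^ (k * (B - r + k)) * qBinom A k q * qBinom B (r - k) q +
          q ^ (k * (B - r + k)) * q ^ ((A : ℤ) + 1 - k) * qBinom A (k - 1) q *
            qBinom B (r - k) q := by
      intro k
      rw [Nat.cast_succ, qBinom_succ hroot]
      ring
    have htop : qBinom A ↑(A + 1) q = 0 := qBinom_of_lt (by omega)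
    have hbot : qBinom A ((0 : ℕ) - 1) q = 0 := qBinom_of_neg (by omega)
    rw [Finset.sum_congr rfl fun k _ => hsplit k, Finset.sum_add_distrib, Finset.sum_range_succ,
      Finset.sum_range_succ' _ (A + 1), htop, hbot, mul_zero, zero_mul, mul_zero, zero_mul,
      add_zero, add_zero,
      show ((A + 1 : ℕ) : ℤ) + B = ↑(A + B) + 1 by push_cast; ring, qBinom_succ hroot,
      Nat.cast_add, ih r, ih (r - 1), Finset.mul_sum]
    congr 1
    refine Finset.sum_congr rfl fun k _ => ?_
    rw [show r - 1 - k = r - ↑(k + 1) by push_cast; ring, Nat.cast_succ, add_sub_cancel_right,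
      ← zpow_add₀ hq, ← mul_assoc, ← mul_assoc, ← zpow_add₀ hq]
    congr 3
    ring

lemma qPoch_inv_sq_mul_pow {s : ℂ} (hs : s ≠ 0) (m : ℕ) :
    qPoch (s ^ 2)⁻¹ (s ^ 2)⁻¹ m * s ^ (m * (m + 1)) = (-1) ^ m * qPoch (s ^ 2) (s ^ 2) m := by
  induction m with
  | zero => simp [qPoch_zero]
  | succ m ih =>
    have hfactor {x : ℂ} (hx : x ≠ 0) : (1 - x⁻¹ * x⁻¹ ^ m) * x ^ (m + 1) = -(1 - x * x ^ m) := by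
      rw [← pow_succ', inv_pow, sub_mul, inv_mul_cancel₀ (pow_ne_zero _ hx), pow_succ']
      ring
    calc qPoch (s ^ 2)⁻¹ (s ^ 2)⁻¹ (m + 1) * s ^ ((m + 1) * (m + 1 + 1))
        = qPoch (s ^ 2)⁻¹ (s ^ 2)⁻¹ m * s ^ (m * (m + 1)) *
            ((1 - (s ^ 2)⁻¹ * ((s ^ 2)⁻¹) ^ m) * (s ^ 2) ^ (m + 1)) := by
          rw [qPoch_succ]; ring
      _ = (-1) ^ (m + 1) * qPoch (s ^ 2) (s ^ 2) (m + 1) := by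
          rw [ih, hfactor (pow_ne_zero 2 hs), qPoch_succ]; ring

lemma qBinom_inv (hq : q ≠ 0) (N k : ℤ) : qBinom N k q⁻¹ = q ^ (-(k * (N - k))) * qBinom N k q := by
  by_cases h : 0 ≤ k ∧ k ≤ N
  · -- a square root of `q` writes `q ^ (m * (m + 1) / 2)` without integer division
    obtain ⟨s, rfl⟩ := IsAlgClosed.exists_pow_nat_eq q two_pos
    have hs : s ≠ 0 := by rintro rfl; simp at hq
    have hPoch (m : ℕ) : qPoch (s ^ 2)⁻¹ (s ^ 2)⁻¹ m =
        (-1) ^ m * qPoch (s ^ 2) (s ^ 2) m / s ^ (m * (m + 1)) :=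
      eq_div_of_mul_eq (pow_ne_zero _ hs) (qPoch_inv_sq_mul_pow hs m)
    obtain ⟨b, rfl⟩ : ∃ b : ℕ, k = b := ⟨k.toNat, by omega⟩
    obtain ⟨c, rfl⟩ : ∃ c : ℕ, N = b + c := ⟨(N - b).toNat, by omega⟩
    rw [qBinom_of_le h.1 h.2, qBinom_of_le h.1 h.2, add_sub_cancel_left,
      show ((b : ℤ) + c).toNat = b + c by omega, Int.toNat_natCast, Int.toNat_natCast,
      zpow_neg, ← Nat.cast_mul, zpow_natCast, hPoch, hPoch, hPoch]
    field_simp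
    ring
  · rcases not_and_or.mp h with h | h
    · rw [qBinom_of_neg (by omega), qBinom_of_neg (by omega), mul_zero]
    · rw [qBinom_of_lt (by omega), qBinom_of_lt (by omega), mul_zero]

lemma qPoch_mul_qPochInvZ {p : ℂ} (hroot : ∀ k : ℕ, 0 < k → p ^ k ≠ 1) (L : ℕ) (n b : ℤ) :
    qPoch p p L * qPochInvZ p n * qPochInvZ p b * qPochInvZ p (L - n - b) =
      qBinom L n p * qBinom (L - n) b p := by
  by_cases h : 0 ≤ n ∧ 0 ≤ b ∧ 0 ≤ (L : ℤ) - n - b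
  · obtain ⟨hn, hb, hw⟩ := h
    rw [qBinom_of_le hn (by omega), qBinom_of_le hb (by omega), Int.toNat_natCast]
    simp only [qPochInvZ, if_pos hn, if_pos hb, if_pos hw]
    have := qPoch_self_ne_zero hroot ((L : ℤ) - n).toNat
    field_simp
  · have hI {m : ℤ} (hm : m < 0) : qPochInvZ p m = 0 := if_neg (by omega)
    rcases (by omega : n < 0 ∨ b < 0 ∨ (0 ≤ b ∧ L < n) ∨ L - n < b) with h | h | h | h
    · rw [hI h, qBinom_of_neg h, mul_zero, zero_mul, zero_mul, zero_mul]
    · rw [hI h, qBinom_of_neg h, mul_zero, zero_mul, mul_zero]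
    · rw [hI (by omega : (L : ℤ) - n - b < 0), qBinom_of_lt h.2, mul_zero, zero_mul]
    · rw [hI (by omega : (L : ℤ) - n - b < 0), qBinom_of_lt h, mul_zero, mul_zero]

lemma qTriT_neg_one_eq_sum {s : ℂ} (hs : s ^ 2 = q) (hq : q ≠ 0)
    (hroot : ∀ k : ℕ, 0 < k → q ^ k ≠ 1) (L : ℕ) (a : ℤ) :
    qTriT (-1) L a q s = ∑ n ∈ Finset.range (L + 1),
      s ^ ((L - 2 * n - a) * (L - 2 * n - a + 1)) * qBinom L n q * qBinom (L - n) (n + a) q := by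
  have hroot' (k : ℕ) (hk : 0 < k) : q⁻¹ ^ k ≠ 1 := by
    rw [inv_pow, inv_ne_one]
    exact hroot k hk
  have hterm (n : ℕ) : q⁻¹ ^ ((n : ℤ) * (n + (a - -1))) * qPoch q⁻¹ q⁻¹ L * qPochInvZ q⁻¹ n *
      qPochInvZ q⁻¹ (n + a) * qPochInvZ q⁻¹ (L - 2 * n - a) =
        q⁻¹ ^ ((n : ℤ) * (n + a + 1)) * qBinom L n q⁻¹ * qBinom (L - n) (n + a) q⁻¹ := by
    have := qPoch_mul_qPochInvZ hroot' L n (n + a)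
    rw [show (L : ℤ) - n - (n + a) = L - 2 * n - a by ring] at this
    rw [show (n : ℤ) + (a - -1) = n + a + 1 by ring]
    linear_combination q⁻¹ ^ ((n : ℤ) * (n + a + 1)) * this
  have hvanish : ∀ n ∉ Finset.range (L + 1),
      q⁻¹ ^ ((n : ℤ) * (n + a + 1)) * qBinom L n q⁻¹ * qBinom (L - n) (n + a) q⁻¹ = 0 := by
    intro n hn
    rw [qBinom_of_lt (by simp at hn; omega), mul_zero, zero_mul]
  rw [qTriT, qTrinomial, tsum_congr hterm, tsum_eq_sum hvanish, Finset.mul_sum]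
  refine Finset.sum_congr rfl fun n _ => ?_
  have hs0 : s ≠ 0 := by rintro rfl; simp [← hs] at hq
  subst hs
  have hexp : s ^ (((L : ℤ) - 2 * n - a) * (L - 2 * n - a + 1)) =
      s ^ ((L : ℤ) * (L - -1) - a * (a - -1)) * s ^ (2 * -((n : ℤ) * (n + a + 1))) *
        s ^ (2 * -((n : ℤ) * (L - n))) * s ^ (2 * -((n + a) * ((L : ℤ) - n - (n + a)))) := by
    rw [← zpow_add₀ hs0, ← zpow_add₀ hs0, ← zpow_add₀ hs0]
    ring_nf
  rw [qBinom_inv hq, qBinom_inv hq, inv_zpow', sq_zpow, sq_zpow, sq_zpow, hexp]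
  ring

lemma qTriT_neg_one_add_eq_sum {s : ℂ} (hs : s ^ 2 = q) (hq : q ≠ 0)
    (hroot : ∀ k : ℕ, 0 < k → q ^ k ≠ 1) (L : ℕ) (a : ℤ) :
    qTriT (-1) L a q s + qTriT (-1) L (a + 1) q s = ∑ n ∈ Finset.range (L + 1),
      s ^ ((L - 2 * n - a) * (L - 2 * n - a - 1)) * qBinom L n q *
        qBinom (L - n + 1) (n + a + 1) q := by
  have hs0 : s ≠ 0 := by rintro rfl; simp [← hs] at hq
  rw [qTriT_neg_one_eq_sum hs hq hroot, qTriT_neg_one_eq_sum hs hq hroot, ← Finset.sum_add_distrib]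
  refine Finset.sum_congr rfl fun n hn => ?_
  have hnL : n ≤ L := Nat.lt_succ_iff.mp (Finset.mem_range.mp hn)
  set w : ℤ := L - 2 * n - a
  have hsplit : s ^ (w * (w + 1)) = s ^ (w * (w - 1)) * q ^ w := by
    rw [← hs, sq_zpow, ← zpow_add₀ hs0]
    ring_nf
  rw [show (L : ℤ) - n = ↑(L - n) by omega, qBinom_succ hroot,
    show ((L - n : ℕ) : ℤ) + 1 - (n + a + 1) = w by omega, add_sub_cancel_right,
    show (L : ℤ) - 2 * n - (a + 1) = w - 1 by ring, sub_add_cancel, mul_comm (w - 1), hsplit,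
    add_assoc]
  ring

lemma sum_range_diag_flip' {M : Type*} [AddCommMonoid M] (N : ℕ) (f : ℕ → ℕ → M) :
    ∑ i ∈ Finset.range N, ∑ n ∈ Finset.range (i + 1), f n (i - n) =
      ∑ m ∈ Finset.range N, ∑ n ∈ Finset.range (N - m), f n m := by
  rw [← Finset.sum_range_diag_flip N fun m n => f n m]
  refine Finset.sum_congr rfl fun i _ => ?_
  rw [← Finset.sum_range_reflect]
  refine Finset.sum_congr rfl fun k hk => ?_
  rw [Nat.add_sub_cancel, Nat.sub_sub_self (Nat.lt_succ_iff.mp (Finset.mem_range.mp hk))]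

lemma sum_qBinom_sub_mul_qBinom_succ (hq : q ≠ 0) (hroot : ∀ k : ℕ, 0 < k → q ^ k ≠ 1)
    {L m : ℕ} (hm : m ≤ L) (a : ℤ) :
    ∑ n ∈ Finset.range (L - m + 1),
        q ^ ((n : ℤ) * (n + a + 1)) * qBinom (L - m) n q * qBinom (m + 1) (m - a - n) q =
      qBinom (L + 1) (m - a) q := by
  have h := qVandermonde hq hroot (L - m) (m + 1) (m - a)
  push_cast [hm] at h
  simp only [show (L : ℤ) - m + (m + 1) = L + 1 by ring,
    show ∀ n : ℤ, n * (m + 1 - (m - a) + n) = n * (n + a + 1) from fun n => by ring] at h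
  exact h.symm

lemma sum_qBinom_mul_qBinom_succ (hq : q ≠ 0) (hroot : ∀ k : ℕ, 0 < k → q ^ k ≠ 1) (L : ℕ)
    (a : ℤ) :
    ∑ m ∈ Finset.range (L + 1), q ^ ((m : ℤ) * (m - a)) * qBinom L m q * qBinom (L + 1) (m - a) q =
      qBinom (2 * L + 1) (L - a) q := by
  rw [show (L : ℤ) - a = 2 * L + 1 - (↑(L + 1) + a) by push_cast; ring, qBinom_sub_right,
    show (2 * L + 1 : ℤ) = L + ↑(L + 1) by push_cast; ring, qVandermonde hq hroot]
  refine Finset.sum_congr rfl fun m _ => ?_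
  push_cast
  rw [← qBinom_sub_right (↑L + 1) (m - a)]
  ring_nf

lemma zpow_mul_qBinom_mul_summand_eq {s : ℂ} (hs : s ^ 2 = q) (hq : q ≠ 0)
    (hroot : ∀ k : ℕ, 0 < k → q ^ k ≠ 1) (L : ℕ) (a : ℤ) (n m : ℕ) :
    s ^ (((n + m : ℕ) : ℤ) * ((n + m : ℕ) + 1)) * qBinom L ↑(n + m) q *
        (s ^ ((↑(n + m) - 2 * n - a) * (↑(n + m) - 2 * n - a - 1)) * qBinom ↑(n + m) n q *
          qBinom (↑(n + m) - n + 1) (n + a + 1) q) =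
      s ^ (a * (a + 1)) * (q ^ ((m : ℤ) * (m - a)) * qBinom L m q) *
        (q ^ ((n : ℤ) * (n + a + 1)) * qBinom (L - m) n q * qBinom (m + 1) (m - a - n) q) := by
  have hs0 : s ≠ 0 := by rintro rfl; simp [← hs] at hq
  push_cast
  have hsymm₁ : qBinom (n + m) n q = qBinom (n + m) m q := by
    rw [← qBinom_sub_right, add_sub_cancel_left]
  have hsymm₂ : qBinom (m + 1) (n + a + 1) q = qBinom (m + 1) (m - a - n) q := by
    rw [← qBinom_sub_right (m + 1 : ℤ) (n + a + 1)]
    ring_nf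
  have hsplit := qBinom_mul_qBinom hroot L (n + m) m
  rw [add_sub_cancel_right] at hsplit
  have hexp : s ^ (((n : ℤ) + m) * (n + m + 1)) *
        s ^ ((n + m - 2 * n - a) * (n + m - 2 * n - a - 1)) =
      s ^ (a * (a + 1)) * q ^ ((m : ℤ) * (m - a)) * q ^ ((n : ℤ) * (n + a + 1)) := by
    rw [← hs, sq_zpow, sq_zpow, ← zpow_add₀ hs0, ← zpow_add₀ hs0, ← zpow_add₀ hs0]
    ring_nf
  rw [hsymm₁, show (n : ℤ) + m - n + 1 = m + 1 by ring, hsymm₂]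
  calc _ = s ^ (((n : ℤ) + m) * (n + m + 1)) *
          s ^ ((n + m - 2 * n - a) * (n + m - 2 * n - a - 1)) *
          (qBinom L (n + m) q * qBinom (n + m) m q) * qBinom (m + 1) (m - a - n) q := by ring
    _ = _ := by rw [hexp, hsplit]; ring

lemma sum_qBinom_mul_qTriT_neg_one_add {s : ℂ} (hs : s ^ 2 = q) (hq : q ≠ 0)
    (hroot : ∀ k : ℕ, 0 < k → q ^ k ≠ 1) (L : ℕ) (a : ℤ) :
    ∑ i ∈ Finset.range (L + 1), s ^ ((i : ℤ) * (i + 1)) * qBinom L i q *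
        (qTriT (-1) i a q s + qTriT (-1) i (a + 1) q s) =
      s ^ (a * (a + 1)) * qBinom (2 * L + 1) (L - a) q := by
  set G : ℕ → ℕ → ℂ := fun n m => s ^ (a * (a + 1)) * (q ^ ((m : ℤ) * (m - a)) * qBinom L m q) *
    (q ^ ((n : ℤ) * (n + a + 1)) * qBinom (L - m) n q * qBinom (m + 1) (m - a - n) q)
  calc ∑ i ∈ Finset.range (L + 1), s ^ ((i : ℤ) * (i + 1)) * qBinom L i q *
        (qTriT (-1) i a q s + qTriT (-1) i (a + 1) q s)
      = ∑ i ∈ Finset.range (L + 1), ∑ n ∈ Finset.range (i + 1), G n (i - n) := by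
        refine Finset.sum_congr rfl fun i _ => ?_
        rw [qTriT_neg_one_add_eq_sum hs hq hroot, Finset.mul_sum]
        refine Finset.sum_congr rfl fun n hn => ?_
        obtain ⟨m, rfl⟩ := Nat.exists_eq_add_of_le (Nat.lt_succ_iff.mp (Finset.mem_range.mp hn))
        rw [Nat.add_sub_cancel_left]
        exact zpow_mul_qBinom_mul_summand_eq hs hq hroot L a n m
    _ = ∑ m ∈ Finset.range (L + 1), ∑ n ∈ Finset.range (L - m + 1), G n m := by
        rw [sum_range_diag_flip']
        refine Finset.sum_congr rfl fun m hm => ?_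
        rw [Nat.sub_add_comm (Nat.lt_succ_iff.mp (Finset.mem_range.mp hm))]
    _ = s ^ (a * (a + 1)) * ∑ m ∈ Finset.range (L + 1),
          q ^ ((m : ℤ) * (m - a)) * qBinom L m q * qBinom (L + 1) (m - a) q := by
        rw [Finset.mul_sum]
        refine Finset.sum_congr rfl fun m hm => ?_
        rw [← Finset.mul_sum, sum_qBinom_sub_mul_qBinom_succ hq hroot
          (Nat.lt_succ_iff.mp (Finset.mem_range.mp hm))]
        ring
    _ = s ^ (a * (a + 1)) * qBinom (2 * L + 1) (L - a) q := by
        rw [sum_qBinom_mul_qBinom_succ hq hroot]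

end QBinomial

theorem bailey_type_Tminus1 (q s : ℂ) (hs : s ^ 2 = q) (hq : q ≠ 0) (hroot : ∀ k : ℕ, 0 < k → q ^ k ≠ 1)
    (α : ℤ → ℂ) (hα : (Function.support α).Finite)
    (F : ℕ → ℂ)
    (hF : ∀ L : ℕ, F L = ∑ᶠ a : ℤ, α a * (qTriT (-1) L a q s + qTriT (-1) L (a + 1) q s))
    (L : ℕ) :
    (∑' i : ℕ, q ^ ((i + 1) * i / 2) * qBinom (L : ℤ) (i : ℤ) q * F i) =
    ∑ᶠ a : ℤ, α a * q ^ ((a + 1) * a / 2) * qBinom (2 * (L : ℤ) + 1) ((L : ℤ) - a) q := by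
  have hfin (g : ℤ → ℂ) (hg : ∀ a, α a = 0 → g a = 0) : ∑ᶠ a, g a = ∑ a ∈ hα.toFinset, g a :=
    finsum_eq_sum_of_support_subset g fun a ha => hα.mem_toFinset.mpr fun h => ha (hg a h)
  have hF' (i : ℕ) :
      F i = ∑ a ∈ hα.toFinset, α a * (qTriT (-1) i a q s + qTriT (-1) i (a + 1) q s) := by
    rw [hF, hfin _ fun a ha => by rw [ha, zero_mul]]
  rw [tsum_eq_sum (s := Finset.range (L + 1)) fun i hi => by
    rw [qBinom_of_lt (by simp at hi; omega), mul_zero, zero_mul]]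
  calc ∑ i ∈ Finset.range (L + 1), q ^ ((i + 1) * i / 2) * qBinom L i q * F i
      = ∑ a ∈ hα.toFinset, α a * ∑ i ∈ Finset.range (L + 1), s ^ ((i : ℤ) * (i + 1)) *
          qBinom L i q * (qTriT (-1) i a q s + qTriT (-1) i (a + 1) q s) := by
        simp only [hF', pow_mul_succ_div_two hs, Finset.mul_sum]
        rw [Finset.sum_comm]
        exact Finset.sum_congr rfl fun a _ => Finset.sum_congr rfl fun i _ => by ring
    _ = ∑ a ∈ hα.toFinset, α a * (s ^ (a * (a + 1)) * qBinom (2 * L + 1) (L - a) q) := by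
        simp only [sum_qBinom_mul_qTriT_neg_one_add hs hq hroot]
    _ = _ := by
        rw [hfin _ fun a ha => by rw [ha, zero_mul, zero_mul]]
        refine Finset.sum_congr rfl fun a _ => ?_
        rw [zpow_mul_succ_div_two hs, mul_assoc]
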